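/- Let p be an odd prime, k ≥ 1, and G = D_{p^k}. In the superpower graph S_G, the degree of the identity is 2p^k − 1, the degree of every reflection is p^k, and the degree of every nonidentity rotation is p^k − 1. -/

import Mathlib

/-!
The identity is adjacent to every vertex. Since `p ^ k` is odd, every rotation has odd order
dividing `p ^ k`, so its order is comparable with `2` only when it is `1`: a reflection is
adjacent exactly to the identity and the other reflections, and a nontrivial rotation exactly
to the other rotations, whose orders are powers of `p` and hence comparable under divisibility.
-/

open DihedralGroup Finset

def superpowerGraph (G : Type*) [Group G] : SimpleGraph G where
  Adj a b := a ≠ b ∧ (orderOf a ∣ orderOf b ∨ orderOf b ∣ orderOf a)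
  symm := ⟨fun _ _ h => ⟨h.1.symm, h.2.symm⟩⟩
  loopless := ⟨fun _ h => h.1 rfl⟩

noncomputable instance (G : Type*) [Group G] [DecidableEq G] :
    DecidableRel (superpowerGraph G).Adj :=
  fun a b => (instDecidableAnd : Decidable (a ≠ b ∧ (orderOf a ∣ orderOf b ∨ orderOf b ∣ orderOf a)))

section SuperpowerGraph

variable {G : Type*} [Group G]

theorem superpowerGraph_adj_iff {a b : G} :
    (superpowerGraph G).Adj a b ↔ a ≠ b ∧ (orderOf a ∣ orderOf b ∨ orderOf b ∣ orderOf a) :=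
  Iff.rfl

theorem superpowerGraph_neighborFinset_one [Fintype G] [DecidableEq G] :
    (superpowerGraph G).neighborFinset 1 = univ.erase 1 := by
  ext x
  simp [superpowerGraph_adj_iff, eq_comm]

theorem superpowerGraph_degree_one [Fintype G] [DecidableEq G] :
    (superpowerGraph G).degree 1 = Fintype.card G - 1 := by
  rw [← SimpleGraph.card_neighborFinset_eq_degree, superpowerGraph_neighborFinset_one,
    card_erase_of_mem (mem_univ _), card_univ]

end SuperpowerGraph

namespace DihedralGroup

variable {n : ℕ}

theorem r_injective : Function.Injective (r : ZMod n → DihedralGroup n) :=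
  fun _ _ h => r.inj h

theorem sr_injective : Function.Injective (sr : ZMod n → DihedralGroup n) :=
  fun _ _ h => sr.inj h

theorem orderOf_r_dvd (i : ZMod n) : orderOf (r i) ∣ n :=
  orderOf_dvd_of_pow_eq_one (by rw [r_pow, ZMod.natCast_self, mul_zero, r_zero])

theorem odd_orderOf_r (hn : Odd n) (i : ZMod n) : Odd (orderOf (r i)) :=
  hn.of_dvd_nat (orderOf_r_dvd i)

theorem orderOf_r_dvd_or_dvd {p k : ℕ} (hp : p.Prime) (i j : ZMod (p ^ k)) :
    orderOf (r i) ∣ orderOf (r j) ∨ orderOf (r j) ∣ orderOf (r i) := by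
  obtain ⟨a, -, ha⟩ := (Nat.dvd_prime_pow hp).mp (orderOf_r_dvd i)
  obtain ⟨b, -, hb⟩ := (Nat.dvd_prime_pow hp).mp (orderOf_r_dvd j)
  rw [ha, hb]
  exact (le_total a b).imp (pow_dvd_pow p) (pow_dvd_pow p)

theorem superpowerGraph_adj_sr_r_iff (hn : Odd n) {i j : ZMod n} :
    (superpowerGraph (DihedralGroup n)).Adj (sr i) (r j) ↔ r j = 1 := by
  have hodd := odd_orderOf_r hn j
  rw [superpowerGraph_adj_iff, orderOf_sr, ← orderOf_eq_one_iff]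
  constructor
  · rintro ⟨-, h | h⟩
    · exact absurd (even_iff_two_dvd.mpr h) (Nat.not_even_iff_odd.mpr hodd)
    · exact ((Nat.dvd_prime Nat.prime_two).mp h).resolve_right
        (fun h2 => Nat.not_even_iff_odd.mpr hodd (h2 ▸ even_two))
  · intro h
    exact ⟨nofun, Or.inr (by simp [h])⟩

theorem superpowerGraph_adj_sr_sr_iff {i j : ZMod n} :
    (superpowerGraph (DihedralGroup n)).Adj (sr i) (sr j) ↔ i ≠ j := by
  simp [superpowerGraph_adj_iff, orderOf_sr]

theorem superpowerGraph_neighborFinset_sr [NeZero n] (hn : Odd n) (i : ZMod n) :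
    (superpowerGraph (DihedralGroup n)).neighborFinset (sr i) =
      insert 1 ((univ.image sr).erase (sr i)) := by
  ext x
  rw [SimpleGraph.mem_neighborFinset]
  cases x with
  | r j => simp [superpowerGraph_adj_sr_r_iff hn, one_def, -r_zero]
  | sr j => simp [superpowerGraph_adj_sr_sr_iff, one_def, -r_zero, eq_comm]

theorem superpowerGraph_degree_sr [NeZero n] (hn : Odd n) (i : ZMod n) :
    (superpowerGraph (DihedralGroup n)).degree (sr i) = n := by
  have h1 : (1 : DihedralGroup n) ∉ (univ.image sr).erase (sr i) := by simp [one_def, -r_zero]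
  rw [← SimpleGraph.card_neighborFinset_eq_degree, superpowerGraph_neighborFinset_sr hn,
    card_insert_of_notMem h1, card_erase_of_mem (mem_image_of_mem _ (mem_univ i)),
    card_image_of_injective _ sr_injective, card_univ, ZMod.card]
  exact Nat.sub_add_cancel hn.pos

theorem superpowerGraph_neighborFinset_r {p k : ℕ} [NeZero (p ^ k)] (hp : p.Prime)
    (hodd : Odd (p ^ k)) {i : ZMod (p ^ k)} (hi : r i ≠ 1) :
    (superpowerGraph (DihedralGroup (p ^ k))).neighborFinset (r i) =
      (univ.image r).erase (r i) := by
  ext x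
  rw [SimpleGraph.mem_neighborFinset]
  cases x with
  | r j => simp [superpowerGraph_adj_iff, orderOf_r_dvd_or_dvd hp, eq_comm]
  | sr j =>
    rw [(superpowerGraph _).adj_comm, superpowerGraph_adj_sr_r_iff hodd]
    simp [hi]

theorem superpowerGraph_degree_r {p k : ℕ} [NeZero (p ^ k)] (hp : p.Prime)
    (hodd : Odd (p ^ k)) {i : ZMod (p ^ k)} (hi : r i ≠ 1) :
    (superpowerGraph (DihedralGroup (p ^ k))).degree (r i) = p ^ k - 1 := by
  rw [← SimpleGraph.card_neighborFinset_eq_degree, superpowerGraph_neighborFinset_r hp hodd hi,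
    card_erase_of_mem (mem_image_of_mem _ (mem_univ i)),
    card_image_of_injective _ r_injective, card_univ, ZMod.card]

end DihedralGroup

theorem stmt12_general (p k : ℕ) (hp : Fact p.Prime) (hp2 : p ≠ 2) :
    (superpowerGraph (DihedralGroup (p ^ k))).degree 1 = 2 * p ^ k - 1 ∧
    (∀ i : ZMod (p ^ k),
      (superpowerGraph (DihedralGroup (p ^ k))).degree (DihedralGroup.sr i) = p ^ k) ∧
    (∀ i : ZMod (p ^ k), DihedralGroup.r i ≠ 1 →
      (superpowerGraph (DihedralGroup (p ^ k))).degree (DihedralGroup.r i) = p ^ k - 1) := by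
  have hodd : Odd (p ^ k) := (hp.out.odd_of_ne_two hp2).pow
  refine ⟨?_, superpowerGraph_degree_sr hodd, fun _ hi => superpowerGraph_degree_r hp.out hodd hi⟩
  rw [superpowerGraph_degree_one, DihedralGroup.card]

theorem stmt12 (p k : ℕ) (hp : Fact p.Prime) (hp2 : p ≠ 2) (hk : 1 ≤ k) :
    (superpowerGraph (DihedralGroup (p ^ k))).degree 1 = 2 * p ^ k - 1 ∧
    (∀ i : ZMod (p ^ k),
      (superpowerGraph (DihedralGroup (p ^ k))).degree (DihedralGroup.sr i) = p ^ k) ∧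
    (∀ i : ZMod (p ^ k), DihedralGroup.r i ≠ 1 →
      (superpowerGraph (DihedralGroup (p ^ k))).degree (DihedralGroup.r i) = p ^ k - 1) :=
  stmt12_general p k hp hp2
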